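/- Let m ≥ 1 and let z, w ∈ {0,1}^m be distinct bit-strings. Let x_z = (z z̄)⁴ and x_w = (w w̄)⁴, and let x_z′ (respectively x_w′) be obtained from x_z (respectively x_w) by flipping exactly one of its last 2 bits. Then the Hamming distance between x_z′ and x_w′ is at least 6. -/
import Mathlib


/-- The length-`8m` bit-string `(z z̄)⁴`: even-indexed blocks carry `z` and
odd-indexed blocks carry the bitwise complement of `z`. -/
def xStr (m : ℕ) (z : Fin m → Bool) : Fin (8 * m) → Bool := fun p =>
  if h : 0 < m then
    let b : ℕ := (p : ℕ) / m
    let o : Fin m := ⟨(p : ℕ) % m, Nat.mod_lt _ h⟩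
    if b % 2 = 0 then z o else !(z o)
  else true

/-- Flip the bit at (absolute) position `q` of a length-`N` bit-string. -/
def flipAt (N : ℕ) (q : ℕ) (v : Fin N → Bool) : Fin N → Bool := fun i =>
  if (i : ℕ) = q then !(v i) else v i

lemma flip_dist_le (N q : ℕ) (v : Fin N → Bool) :
    hammingDist (flipAt N q v) v ≤ 1 := by
  rw [hammingDist]
  apply Finset.card_le_one.2
  intro i hi j hj
  simp only [Finset.mem_filter, flipAt] at hi hj
  have hiq : (i : ℕ) = q := by
    by_contra h; simp [h] at hi
  have hjq : (j : ℕ) = q := by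
    by_contra h; simp [h] at hj
  exact Fin.ext (hiq.trans hjq.symm)

lemma base_dist (m : ℕ) (hm : 1 ≤ m) (z w : Fin m → Bool) (hzw : z ≠ w) :
    8 ≤ hammingDist (xStr m z) (xStr m w) := by
  obtain ⟨j, hj⟩ := Function.ne_iff.1 hzw
  have hmpos : 0 < m := hm
  have hlt : ∀ k, k < 8 → m * k + (j : ℕ) < 8 * m := by
    intro k hk
    have : m * k + (j : ℕ) < m * (k + 1) := by
      have := j.isLt; rw [Nat.mul_add, Nat.mul_one]; omega
    calc m * k + (j : ℕ) < m * (k + 1) := this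
      _ ≤ m * 8 := Nat.mul_le_mul_left m (by omega)
      _ = 8 * m := Nat.mul_comm m 8
  set S : Finset (Fin (8 * m)) :=
    (Finset.range 8).attach.image (fun k => ⟨m * k.1 + (j : ℕ),
      hlt k.1 (Finset.mem_range.1 k.2)⟩) with hS
  have hdiff : ∀ p ∈ S, xStr m z p ≠ xStr m w p := by
    intro p hp
    simp only [hS, Finset.mem_image] at hp
    obtain ⟨k, _, rfl⟩ := hp
    simp only [xStr, hmpos, dif_pos]
    have hdiv : (m * k.1 + (j : ℕ)) / m = k.1 + (j : ℕ) / m := Nat.mul_add_div hmpos _ _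
    have hj0 : (j : ℕ) / m = 0 := Nat.div_eq_of_lt j.isLt
    have hmod : (m * k.1 + (j : ℕ)) % m = (j : ℕ) := by
      rw [Nat.mul_add_mod, Nat.mod_eq_of_lt j.isLt]
    have hfin : (⟨(m * k.1 + (j : ℕ)) % m, Nat.mod_lt _ hmpos⟩ : Fin m) = j :=
      Fin.ext hmod
    rw [hdiv, hj0, Nat.add_zero, hfin]
    by_cases hk2 : k.1 % 2 = 0 <;> simp [hk2, hj]
  have hcard : S.card = 8 := by
    rw [hS, Finset.card_image_of_injective _ ?_, Finset.card_attach, Finset.card_range]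
    intro k1 k2 h
    have : m * k1.1 + (j : ℕ) = m * k2.1 + (j : ℕ) := congrArg Fin.val h
    have : k1.1 = k2.1 := by
      have h' : m * k1.1 = m * k2.1 := by omega
      exact Nat.eq_of_mul_eq_mul_left hmpos h'
    exact Subtype.ext this
  calc 8 = S.card := hcard.symm
    _ ≤ hammingDist (xStr m z) (xStr m w) := by
        rw [hammingDist]
        apply Finset.card_le_card
        intro p hp
        simp only [Finset.mem_filter, Finset.mem_univ, true_and]
        exact hdiff p hp

/-- For `m ≥ 1` and distinct `z, w ∈ {0,1}^m`, if `x_z′` and `x_w′`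
are obtained from `(z z̄)⁴` and `(w w̄)⁴` respectively by flipping exactly one of the
last `2` bits, then the Hamming distance between `x_z′` and `x_w′` is at least `6`. -/
theorem stmt15 (m : ℕ) (hm : 1 ≤ m) (z w : Fin m → Bool) (hzw : z ≠ w)
    (a b : ℕ) (ha : a < 2) (hb : b < 2) :
    6 ≤ hammingDist (flipAt (8 * m) (8 * m - 1 - a) (xStr m z))
        (flipAt (8 * m) (8 * m - 1 - b) (xStr m w)) := by
  have h8 := base_dist m hm z w hzw
  have h1 := flip_dist_le (8 * m) (8 * m - 1 - a) (xStr m z)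
  have h2 := flip_dist_le (8 * m) (8 * m - 1 - b) (xStr m w)
  have t1 := hammingDist_triangle (xStr m z)
    (flipAt (8 * m) (8 * m - 1 - a) (xStr m z)) (flipAt (8 * m) (8 * m - 1 - b) (xStr m w))
  have t2 := hammingDist_triangle (xStr m z)
    (flipAt (8 * m) (8 * m - 1 - b) (xStr m w)) (xStr m w)
  have c1 := hammingDist_comm (xStr m z) (flipAt (8 * m) (8 * m - 1 - a) (xStr m z))
  have c2 := hammingDist_comm (flipAt (8 * m) (8 * m - 1 - b) (xStr m w)) (xStr m w)
  omega
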